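/- arXiv:1912.02378 — 5 statements merged into one kernel-verified Lean document; each statement's English description precedes it below -/
import Mathlib

section
/- For a connected graph G of order n ≥ 2, the smallest signless Laplacian eigenvalue γₙ(G) is strictly less than the minimum vertex degree dₙ(G). -/
open Matrix SimpleGraph Polynomial

/-- The signless Laplacian matrix Q(G) = D(G) + A(G). -/
noncomputable def signlessLaplacian {V : Type*} [Fintype V] [DecidableEq V]
    (G : SimpleGraph V) [DecidableRel G.Adj] : Matrix V V ℝ :=
  Matrix.diagonal (fun v => (G.degree v : ℝ)) + G.adjMatrix ℝ

/-- Eigenvalues (roots of the characteristic polynomial, with multiplicity),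
sorted in non-increasing order. -/
noncomputable def eigsDesc {V : Type*} [Fintype V] [DecidableEq V] (M : Matrix V V ℝ) : List ℝ :=
  (M.charpoly.roots.sort (· ≤ ·)).reverse

/-- Vertex degrees sorted in non-increasing order. -/
noncomputable def degsDesc {V : Type*} [Fintype V] [DecidableEq V]
    (G : SimpleGraph V) [DecidableRel G.Adj] : List ℕ :=
  ((Finset.univ.val.map fun v => G.degree v).sort (· ≤ ·)).reverse

/-!
If `μ` is the least eigenvalue of a real symmetric matrix `A`, then `A - μ • 1` is positive
semidefinite, so its diagonal entries `A i i - μ` are nonnegative, and a vanishing one forces the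
whole column `i` of `A - μ • 1` to vanish. For `A = Q(G)` and `i` a vertex of minimum degree, the
column contains the entry `1` at any neighbour of `i`, which exists since `G` is connected with at
least two vertices.
-/

theorem Multiset.isLeast_getD_reverse_sort {α : Type*} [LinearOrder α] {s : Multiset α}
    (hs : s ≠ 0) (d : α) :
    IsLeast {x | x ∈ s} ((s.sort (· ≤ ·)).reverse.getD (Multiset.card s - 1) d) := by
  set l := s.sort (· ≤ ·)
  have hlen : l.length = Multiset.card s := Multiset.length_sort _
  have hpos : 0 < l.length := by rw [hlen]; exact Multiset.card_pos.mpr hs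
  have hhead : l.reverse.getD (Multiset.card s - 1) d = l[0] := by
    rw [List.getD_eq_getElem _ _ (by simp; omega), List.getElem_reverse]
    simp only [hlen]; congr; omega
  rw [hhead]
  refine ⟨(Multiset.mem_sort _).mp (List.getElem_mem hpos), fun x hx => ?_⟩
  obtain ⟨k, hk, rfl⟩ := List.mem_iff_getElem.mp ((Multiset.mem_sort (· ≤ ·)).mpr hx)
  rcases Nat.eq_zero_or_pos k with rfl | hk0
  · rfl
  · exact (Multiset.pairwise_sort s (· ≤ ·)).rel_get_of_lt (a := ⟨0, hpos⟩) (b := ⟨k, hk⟩) hk0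

section

open scoped ComplexOrder

variable {𝕜 : Type*} [RCLike 𝕜] {n : Type*} [Fintype n] [DecidableEq n]

open scoped MatrixOrder Matrix.Norms.L2Operator in
theorem Matrix.IsHermitian.posSemidef_sub_smul_one {A : Matrix n n 𝕜} (hA : A.IsHermitian) {μ : ℝ}
    (h : ∀ i, μ ≤ hA.eigenvalues i) : (A - μ • 1).PosSemidef := by
  rw [← Matrix.le_iff, ← Algebra.algebraMap_eq_smul_one,
    algebraMap_le_iff_le_spectrum (a := A) hA.isSelfAdjoint,
    hA.spectrum_real_eq_range_eigenvalues]
  rintro _ ⟨i, rfl⟩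
  exact h i

theorem Matrix.PosSemidef.apply_eq_zero_of_diag_eq_zero {M : Matrix n n 𝕜} (hM : M.PosSemidef)
    {i : n} (hi : M i i = 0) (j : n) : M j i = 0 := by
  have := (hM.dotProduct_mulVec_zero_iff (Pi.single i 1)).mp (by simpa [mulVec_single_one] using hi)
  simpa [mulVec_single_one] using congrFun this j

theorem Matrix.IsHermitian.lt_apply_self_of_le_eigenvalues {A : Matrix n n ℝ} (hA : A.IsHermitian)
    {μ : ℝ} (h : ∀ k, μ ≤ hA.eigenvalues k) {i j : n} (hji : j ≠ i) (hA_ji : A j i ≠ 0) :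
    μ < A i i := by
  have hM := hA.posSemidef_sub_smul_one h
  have hdiag : (A - μ • 1) i i = A i i - μ := by simp
  refine sub_pos.mp (lt_of_le_of_ne (hdiag ▸ hM.diag_nonneg) fun h0 => hA_ji ?_)
  simpa [hji] using hM.apply_eq_zero_of_diag_eq_zero (hdiag.trans h0.symm) j

theorem isLeast_eigsDesc_getD [Nonempty n] {A : Matrix n n ℝ} (hA : A.IsHermitian) :
    IsLeast (Set.range hA.eigenvalues) ((eigsDesc A).getD (Fintype.card n - 1) 0) := by
  have hroots : A.charpoly.roots = Finset.univ.val.map hA.eigenvalues := by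
    simpa using hA.roots_charpoly_eq_eigenvalues
  have hcard : Multiset.card A.charpoly.roots = Fintype.card n := by simp [hroots]
  have hne : A.charpoly.roots ≠ 0 := by
    rw [← Multiset.card_pos, hcard]; exact Fintype.card_pos
  have := Multiset.isLeast_getD_reverse_sort hne 0
  rw [hcard] at this
  simpa [eigsDesc, hroots, Set.range] using this

end

section

variable {V : Type*} [Fintype V] [DecidableEq V] (G : SimpleGraph V) [DecidableRel G.Adj]

theorem degsDesc_getD_card_sub_one [Nonempty V] :
    (degsDesc G).getD (Fintype.card V - 1) 0 = G.minDegree := by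
  set s := Finset.univ.val.map fun v => G.degree v
  have hcard : Multiset.card s = Fintype.card V := by simp [s]
  have hne : s ≠ 0 := by rw [← Multiset.card_pos, hcard]; exact Fintype.card_pos
  have hleast := Multiset.isLeast_getD_reverse_sort hne 0
  rw [hcard] at hleast
  obtain ⟨v, hv⟩ := G.exists_minimal_degree_vertex
  obtain ⟨w, -, hw⟩ := Multiset.mem_map.mp hleast.1
  refine le_antisymm ?_ ?_
  · exact hv ▸ hleast.2 (Multiset.mem_map_of_mem (fun v => G.degree v) (Finset.mem_univ_val v))
  · exact hw ▸ G.minDegree_le_degree w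

theorem isHermitian_signlessLaplacian : (signlessLaplacian G).IsHermitian :=
  (isHermitian_diagonal_iff.mpr fun _ => IsSelfAdjoint.all _).add G.isSymm_adjMatrix

theorem signlessLaplacian_apply_self (v : V) : signlessLaplacian G v v = G.degree v := by
  simp [signlessLaplacian]

theorem signlessLaplacian_apply_of_adj {u v : V} (h : G.Adj u v) : signlessLaplacian G u v = 1 := by
  simp [signlessLaplacian, h.ne, h]

end

theorem stmt_10 {V : Type*} [Fintype V] [DecidableEq V] (G : SimpleGraph V)
    [DecidableRel G.Adj] (hG : G.Connected) (hn : 2 ≤ Fintype.card V) :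
    (eigsDesc (signlessLaplacian G)).getD (Fintype.card V - 1) 0
      < ((degsDesc G).getD (Fintype.card V - 1) 0 : ℝ) := by
  have : Nontrivial V := Fintype.one_lt_card_iff_nontrivial.mp hn
  obtain ⟨v, hv⟩ := G.exists_minimal_degree_vertex
  obtain ⟨u, hvu⟩ := hG.preconnected.exists_adj_of_nontrivial v
  have hQ := isHermitian_signlessLaplacian G
  rw [degsDesc_getD_card_sub_one, hv, ← signlessLaplacian_apply_self]
  exact hQ.lt_apply_self_of_le_eigenvalues (fun k => (isLeast_eigsDesc_getD hQ).2 ⟨k, rfl⟩)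
    hvu.ne.symm (by rw [signlessLaplacian_apply_of_adj G hvu.symm]; exact one_ne_zero)
end

section
/- The signless Laplacian spectrum of the double star G(p,2,q) consists of the eigenvalue 1 with multiplicity p+q−2, the eigenvalue 0 with multiplicity 1, and the three roots of x³ − (p+q+4)x² + (pq+2p+2q+5)x − (p+q+2). -/
open Matrix SimpleGraph Polynomial

/-- The double star G(p,2,q): vertices 0 and 1 are adjacent centers; vertices
2,…,p+1 are pendants attached to 0, and vertices p+2,…,p+q+1 are pendants attached to 1. -/
def doubleStar (p q : ℕ) : SimpleGraph (Fin (p + q + 2)) :=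
  SimpleGraph.fromRel (fun a b =>
    ((a : ℕ) = 0 ∧ (b : ℕ) = 1) ∨
    ((a : ℕ) = 0 ∧ 2 ≤ (b : ℕ) ∧ (b : ℕ) < p + 2) ∨
    ((a : ℕ) = 1 ∧ p + 2 ≤ (b : ℕ)))

instance (p q : ℕ) : DecidableRel (doubleStar p q).Adj := fun a b => by
  unfold doubleStar; exact inferInstanceAs (Decidable (_ ∧ _))

lemma ds_adj (p q : ℕ) (a b : Fin (p+q+2)) :
    (doubleStar p q).Adj a b ↔
      ((a:ℕ) = 0 ∧ 1 ≤ (b:ℕ) ∧ (b:ℕ) < p+2) ∨ ((b:ℕ) = 0 ∧ 1 ≤ (a:ℕ) ∧ (a:ℕ) < p+2) ∨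
      ((a:ℕ) = 1 ∧ p+2 ≤ (b:ℕ)) ∨ ((b:ℕ) = 1 ∧ p+2 ≤ (a:ℕ)) := by
  simp only [doubleStar, fromRel_adj, ne_eq, Fin.ext_iff]
  omega

lemma card_filter_fin (n : ℕ) (P : ℕ → Prop) [DecidablePred P] :
    (Finset.univ.filter fun i : Fin n => P i.val).card
      = ((Finset.range n).filter P).card := by
  rw [← Finset.card_map Fin.valEmbedding]
  congr 1
  ext m
  simp only [Finset.mem_map, Finset.mem_filter, Finset.mem_univ, true_and, Finset.mem_range,
    Fin.valEmbedding_apply]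
  constructor
  · rintro ⟨i, hi, rfl⟩; exact ⟨i.isLt, hi⟩
  · rintro ⟨hm, hP⟩; exact ⟨⟨m, hm⟩, hP, rfl⟩

lemma ds_degree_zero (p q : ℕ) (v : Fin (p+q+2)) (hv : (v:ℕ) = 0) :
    (doubleStar p q).degree v = p + 1 := by
  show ((doubleStar p q).neighborFinset v).card = p + 1
  rw [neighborFinset_eq_filter]
  rw [Finset.filter_congr (q := fun w : Fin (p+q+2) => 1 ≤ (w:ℕ) ∧ (w:ℕ) < p + 2)
    (fun w _ => by rw [ds_adj]; omega)]
  rw [card_filter_fin (p+q+2) (fun m => 1 ≤ m ∧ m < p + 2)]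
  have : (Finset.range (p+q+2)).filter (fun m => 1 ≤ m ∧ m < p + 2) = Finset.Ico 1 (p+2) := by
    ext m; simp [Finset.mem_Ico]; omega
  rw [this, Nat.card_Ico]
  omega

lemma ds_degree_one (p q : ℕ) (v : Fin (p+q+2)) (hv : (v:ℕ) = 1) :
    (doubleStar p q).degree v = q + 1 := by
  show ((doubleStar p q).neighborFinset v).card = q + 1
  rw [neighborFinset_eq_filter]
  rw [Finset.filter_congr (q := fun w : Fin (p+q+2) => (w:ℕ) = 0 ∨ p + 2 ≤ (w:ℕ))
    (fun w _ => by rw [ds_adj]; omega)]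
  rw [card_filter_fin (p+q+2) (fun m => m = 0 ∨ p + 2 ≤ m)]
  have : (Finset.range (p+q+2)).filter (fun m => m = 0 ∨ p + 2 ≤ m)
      = insert 0 (Finset.Ico (p+2) (p+q+2)) := by
    ext m; simp [Finset.mem_Ico]; omega
  rw [this, Finset.card_insert_of_notMem (by simp), Nat.card_Ico]
  omega

lemma ds_degree_pendant (p q : ℕ) (v : Fin (p+q+2)) (hv : 2 ≤ (v:ℕ)) :
    (doubleStar p q).degree v = 1 := by
  obtain ⟨c, hc, hadj⟩ : ∃ c, c < p + q + 2 ∧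
      ∀ w : Fin (p+q+2), (doubleStar p q).Adj v w ↔ (w:ℕ) = c := by
    rcases lt_or_ge (v:ℕ) (p+2) with h | h
    · exact ⟨0, by omega, fun w => by rw [ds_adj]; omega⟩
    · exact ⟨1, by omega, fun w => by rw [ds_adj]; omega⟩
  show ((doubleStar p q).neighborFinset v).card = 1
  rw [neighborFinset_eq_filter]
  rw [Finset.filter_congr (q := fun w : Fin (p+q+2) => (w:ℕ) = c) (fun w _ => hadj w)]
  rw [card_filter_fin (p+q+2) (fun m => m = c)]
  have : (Finset.range (p+q+2)).filter (fun m => m = c) = {c} := by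
    ext m
    simp only [Finset.mem_filter, Finset.mem_range, Finset.mem_singleton]
    omega
  rw [this, Finset.card_singleton]

lemma eval_charpoly' {n : Type*} [Fintype n] [DecidableEq n] (M : Matrix n n ℝ) (x : ℝ) :
    M.charpoly.eval x = (x • (1 : Matrix n n ℝ) - M).det := by
  rw [Matrix.charpoly, ← Polynomial.coe_evalRingHom, RingHom.map_det]
  congr 1
  ext i j
  by_cases h : i = j
  · subst h
    simp [Matrix.charmatrix_apply_eq, Matrix.sub_apply, Matrix.smul_apply, Matrix.one_apply_eq]
  · simp [Matrix.charmatrix_apply_ne _ _ _ h, Matrix.sub_apply, Matrix.smul_apply,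
      Matrix.one_apply_ne h]

lemma entry_formula (p q : ℕ) (x : ℝ) (a b : Fin (p+q+2)) :
    (x • (1 : Matrix (Fin (p+q+2)) (Fin (p+q+2)) ℝ) - signlessLaplacian (doubleStar p q)) a b
      = (if (a:ℕ) = (b:ℕ) then
            x - (if (a:ℕ) = 0 then (p:ℝ)+1 else if (a:ℕ) = 1 then (q:ℝ)+1 else 1) else 0)
        - (if ((a:ℕ) = 0 ∧ 1 ≤ (b:ℕ) ∧ (b:ℕ) < p+2) ∨ ((b:ℕ) = 0 ∧ 1 ≤ (a:ℕ) ∧ (a:ℕ) < p+2) ∨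
            ((a:ℕ) = 1 ∧ p+2 ≤ (b:ℕ)) ∨ ((b:ℕ) = 1 ∧ p+2 ≤ (a:ℕ)) then 1 else 0) := by
  have hd : ((doubleStar p q).degree a : ℝ)
      = (if (a:ℕ) = 0 then (p:ℝ)+1 else if (a:ℕ) = 1 then (q:ℝ)+1 else 1) := by
    by_cases h0 : (a:ℕ) = 0
    · rw [ds_degree_zero p q a h0]; simp [h0]
    · by_cases h1 : (a:ℕ) = 1
      · rw [ds_degree_one p q a h1]; simp [h0, h1]
      · rw [ds_degree_pendant p q a (by omega)]; simp [h0, h1]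
  simp only [Matrix.sub_apply, Matrix.smul_apply, Matrix.one_apply, signlessLaplacian,
    Matrix.add_apply, Matrix.diagonal_apply, SimpleGraph.adjMatrix_apply, smul_eq_mul, mul_ite,
    mul_one, mul_zero, hd, ds_adj, Fin.ext_iff]
  split_ifs <;> ring

/-- entry function of x•1 - Q in terms of the natural-number values of indices -/
def gEnt (p q : ℕ) (x : ℝ) (a b : ℕ) : ℝ :=
  (if a = b then x - (if a = 0 then (p:ℝ)+1 else if a = 1 then (q:ℝ)+1 else 1) else 0)
    - (if (a = 0 ∧ 1 ≤ b ∧ b < p+2) ∨ (b = 0 ∧ 1 ≤ a ∧ a < p+2) ∨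
        (a = 1 ∧ p+2 ≤ b) ∨ (b = 1 ∧ p+2 ≤ a) then 1 else 0)

lemma entry_formula' (p q : ℕ) (x : ℝ) (a b : Fin (p+q+2)) :
    (x • (1 : Matrix (Fin (p+q+2)) (Fin (p+q+2)) ℝ) - signlessLaplacian (doubleStar p q)) a b
      = gEnt p q x (a:ℕ) (b:ℕ) := by
  rw [entry_formula]; rfl

variable {p q : ℕ} {x : ℝ}

lemma gEnt_symm (a b : ℕ) : gEnt p q x a b = gEnt p q x b a := by
  unfold gEnt
  rcases eq_or_ne a b with rfl | h
  · rfl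
  · rw [if_neg h, if_neg (Ne.symm h)]
    congr 1
    exact if_congr (by tauto) rfl rfl

lemma g00 : gEnt p q x 0 0 = x - ((p:ℝ)+1) := by
  unfold gEnt
  rw [if_pos rfl, if_pos rfl, if_neg (by omega)]
  ring

lemma g01 : gEnt p q x 0 1 = -1 := by
  unfold gEnt
  rw [if_neg (by omega), if_pos (Or.inl ⟨rfl, by omega, by omega⟩)]
  ring

lemma g11 : gEnt p q x 1 1 = x - ((q:ℝ)+1) := by
  unfold gEnt
  rw [if_pos rfl, if_neg (by omega), if_pos rfl, if_neg (by omega)]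
  ring

lemma g0p {j : ℕ} (hj : j < p) : gEnt p q x 0 (2+j) = -1 := by
  unfold gEnt
  rw [if_neg (by omega), if_pos (Or.inl ⟨rfl, by omega, by omega⟩)]
  ring

lemma g0p' {j : ℕ} (hj : p ≤ j) : gEnt p q x 0 (2+j) = 0 := by
  unfold gEnt
  rw [if_neg (by omega), if_neg (by omega)]
  ring

lemma g1p {j : ℕ} (hj : p ≤ j) : gEnt p q x 1 (2+j) = -1 := by
  unfold gEnt
  rw [if_neg (by omega), if_pos (Or.inr (Or.inr (Or.inl ⟨rfl, by omega⟩)))]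
  ring

lemma g1p' {j : ℕ} (hj : j < p) : gEnt p q x 1 (2+j) = 0 := by
  unfold gEnt
  rw [if_neg (by omega), if_neg (by omega)]
  ring

lemma gpp (j : ℕ) : gEnt p q x (2+j) (2+j) = x - 1 := by
  unfold gEnt
  rw [if_pos rfl, if_neg (by omega), if_neg (by omega), if_neg (by omega)]
  ring

lemma gpp' {j l : ℕ} (h : j ≠ l) : gEnt p q x (2+j) (2+l) = 0 := by
  unfold gEnt
  rw [if_neg (by omega), if_neg (by omega)]
  ring

set_option maxHeartbeats 1000000 in
lemma ds_det (p q : ℕ) (x : ℝ) (hx : x - 1 ≠ 0) :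
    (x • (1 : Matrix (Fin (p+q+2)) (Fin (p+q+2)) ℝ) - signlessLaplacian (doubleStar p q)).det
      = (x-1)^(p+q) *
        ((x - ((p:ℝ)+1) - (x-1)⁻¹ * p) * (x - ((q:ℝ)+1) - (x-1)⁻¹ * q) - 1) := by
  set A : Matrix (Fin 2) (Fin 2) ℝ :=
    Matrix.of (fun i k : Fin 2 => gEnt p q x (i:ℕ) (k:ℕ)) with hA
  set B : Matrix (Fin 2) (Fin (p+q)) ℝ :=
    Matrix.of (fun i j => gEnt p q x (i:ℕ) (2 + (j:ℕ))) with hB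
  set C : Matrix (Fin (p+q)) (Fin 2) ℝ :=
    Matrix.of (fun j k => gEnt p q x (2 + (j:ℕ)) (k:ℕ)) with hC
  let e : Fin 2 ⊕ Fin (p+q) ≃ Fin (p+q+2) := finSumFinEquiv.trans (finCongr (by omega))
  have he0 : ∀ i : Fin 2, ((e (Sum.inl i)):ℕ) = (i:ℕ) := fun i => by simp [e]
  have he2 : ∀ j : Fin (p+q), ((e (Sum.inr j)):ℕ) = 2 + (j:ℕ) := fun j => by
    simp [e]; omega
  have hM : (x • (1 : Matrix (Fin (p+q+2)) (Fin (p+q+2)) ℝ)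
        - signlessLaplacian (doubleStar p q)).submatrix e e
      = Matrix.fromBlocks A B C ((x-1) • (1 : Matrix (Fin (p+q)) (Fin (p+q)) ℝ)) := by
    ext ik jl
    rcases ik with i | j <;> rcases jl with k | l
    · rw [Matrix.submatrix_apply, entry_formula', he0 i, he0 k]; rfl
    · rw [Matrix.submatrix_apply, entry_formula', he0 i, he2 l]; rfl
    · rw [Matrix.submatrix_apply, entry_formula', he2 j, he0 k]; rfl
    · rw [Matrix.submatrix_apply, entry_formula', he2 j, he2 l,
        Matrix.fromBlocks_apply₂₂, Matrix.smul_apply, Matrix.one_apply]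
      rcases eq_or_ne j l with rfl | hjl
      · rw [gpp, if_pos rfl, smul_eq_mul]; ring
      · rw [gpp' (by simpa [Fin.ext_iff] using hjl), if_neg hjl, smul_eq_mul]; ring
  rw [← Matrix.det_submatrix_equiv_self e, hM]
  letI : Invertible ((x-1) • (1 : Matrix (Fin (p+q)) (Fin (p+q)) ℝ)) :=
    ⟨(x-1)⁻¹ • 1,
     by rw [Matrix.smul_mul, Matrix.one_mul, smul_smul, inv_mul_cancel₀ hx, one_smul],
     by rw [Matrix.smul_mul, Matrix.one_mul, smul_smul, mul_inv_cancel₀ hx, one_smul]⟩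
  rw [Matrix.det_fromBlocks₂₂]
  have hDdet : ((x-1) • (1 : Matrix (Fin (p+q)) (Fin (p+q)) ℝ)).det = (x-1)^(p+q) := by
    rw [Matrix.det_smul, Matrix.det_one, mul_one, Fintype.card_fin]
  have hinv : ⅟((x-1) • (1 : Matrix (Fin (p+q)) (Fin (p+q)) ℝ))
      = (x-1)⁻¹ • (1 : Matrix (Fin (p+q)) (Fin (p+q)) ℝ) := rfl
  rw [hDdet, hinv, Matrix.mul_smul, Matrix.mul_one, Matrix.smul_mul]
  have hBC : B * C = Matrix.of (fun i k : Fin 2 =>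
      if (i:ℕ) = (k:ℕ) then (if (i:ℕ) = 0 then (p:ℝ) else (q:ℝ)) else 0) := by
    ext i k
    rw [Matrix.mul_apply, Matrix.of_apply]
    have hi2 := i.isLt
    have hk2 := k.isLt
    rcases (by omega : (i:ℕ) = 0 ∨ (i:ℕ) = 1) with hi | hi <;>
      rcases (by omega : (k:ℕ) = 0 ∨ (k:ℕ) = 1) with hk | hk <;>
      simp only [hB, hC, Matrix.of_apply, hi, hk]
    · rw [Finset.sum_congr rfl (fun (j : Fin (p+q)) _ =>
          show gEnt p q x 0 (2+(j:ℕ)) * gEnt p q x (2+(j:ℕ)) 0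
            = if (j:ℕ) < p then 1 else 0 from by
        rw [gEnt_symm (2+(j:ℕ)) 0]
        rcases lt_or_ge (j:ℕ) p with hj | hj
        · rw [g0p hj, if_pos hj]; ring
        · rw [g0p' hj, if_neg (by omega)]; ring)]
      rw [Finset.sum_boole, card_filter_fin (p+q) (fun m => m < p)]
      rw [show (Finset.range (p+q)).filter (fun m => m < p) = Finset.range p from by
        ext m; simp only [Finset.mem_filter, Finset.mem_range]; omega]
      norm_num
    · rw [Finset.sum_eq_zero (fun (j : Fin (p+q)) _ =>
          show gEnt p q x 0 (2+(j:ℕ)) * gEnt p q x (2+(j:ℕ)) 1 = 0 from by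
        rw [gEnt_symm (2+(j:ℕ)) 1]
        rcases lt_or_ge (j:ℕ) p with hj | hj
        · rw [g1p' hj]; ring
        · rw [g0p' hj]; ring)]
      norm_num
    · rw [Finset.sum_eq_zero (fun (j : Fin (p+q)) _ =>
          show gEnt p q x 1 (2+(j:ℕ)) * gEnt p q x (2+(j:ℕ)) 0 = 0 from by
        rw [gEnt_symm (2+(j:ℕ)) 0]
        rcases lt_or_ge (j:ℕ) p with hj | hj
        · rw [g1p' hj]; ring
        · rw [g0p' hj]; ring)]
      norm_num
    · rw [Finset.sum_congr rfl (fun (j : Fin (p+q)) _ =>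
          show gEnt p q x 1 (2+(j:ℕ)) * gEnt p q x (2+(j:ℕ)) 1
            = if p ≤ (j:ℕ) then 1 else 0 from by
        rw [gEnt_symm (2+(j:ℕ)) 1]
        rcases lt_or_ge (j:ℕ) p with hj | hj
        · rw [g1p' hj, if_neg (by omega)]; ring
        · rw [g1p hj, if_pos hj]; ring)]
      rw [Finset.sum_boole, card_filter_fin (p+q) (fun m => p ≤ m)]
      rw [show (Finset.range (p+q)).filter (fun m => p ≤ m) = Finset.Ico p (p+q) from by
        ext m; simp only [Finset.mem_filter, Finset.mem_range, Finset.mem_Ico]; omega]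
      rw [Nat.card_Ico]
      norm_num
  rw [hBC, Matrix.det_fin_two]
  simp only [hA, Matrix.sub_apply, Matrix.smul_apply, Matrix.of_apply, Fin.isValue,
    Fin.val_zero, Fin.val_one, smul_eq_mul]
  rw [g00, g01, g11, gEnt_symm 1 0, g01]
  norm_num
  try ring

theorem stmt_12 (p q : ℕ) (hp : 1 ≤ p) (hq : 1 ≤ q) :
    (signlessLaplacian (doubleStar p q)).charpoly =
      (X - 1) ^ (p + q - 2) * X *
        (X ^ 3 - C ((p : ℝ) + q + 4) * X ^ 2
          + C ((p : ℝ) * q + 2 * p + 2 * q + 5) * X - C ((p : ℝ) + q + 2)) := by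
  refine Polynomial.eq_of_infinite_eval_eq _ _ ((Set.Ioi_infinite (1:ℝ)).mono ?_)
  intro x hx
  simp only [Set.mem_Ioi] at hx
  simp only [Set.mem_setOf_eq]
  have hx1 : x - 1 ≠ 0 := sub_ne_zero.mpr (ne_of_gt hx)
  rw [eval_charpoly', ds_det p q x hx1]
  simp only [eval_mul, eval_pow, eval_sub, eval_add, eval_C, eval_X, eval_one]
  obtain ⟨k, hk⟩ : ∃ k, p + q = k + 2 := ⟨p + q - 2, by omega⟩
  have hk2 : p + q - 2 = k := by omega
  rw [hk2, hk, pow_add]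
  rw [mul_assoc, mul_assoc]
  congr 1
  field_simp
  ring
end

section
/- For p ≥ q ≥ 1, the second largest signless Laplacian eigenvalue of the double star G(p,2,q) lies in [q+1, q+2), and equals q+1 if and only if p = q. -/
open Matrix SimpleGraph Polynomial

/-!
Listing the two centres first, `Q` has block form `[[A, B], [Bᵀ, I]]` with
`A = [[p+1, 1], [1, q+1]]` and `B Bᵀ = diag(p, q)`. Eliminating the identity block gives
`(x-1)² χ_Q(x) = (x-1)^(p+q) · det((x-1)(xI - A) - B Bᵀ) = (x-1)^(p+q) · x · f(x)`, where `f` is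
the cubic `doubleStarCubic p q`. Since `f` takes the values `-(p+q+2), pq, q(p-q), -p` at
`0, 1, q+1, q+2` and is positive at `p+q+4`, it has one root in `(0, 1)`, one in `[q+1, q+2)` and
one above `q+2`. So `γ₂` is the middle root of `f`, and it equals `q+1` exactly when
`f(q+1) = q(p-q)` vanishes.
-/

lemma Matrix.det_fromBlocks_smul_one {m n R : Type*} [Fintype m] [DecidableEq m] [Fintype n]
    [DecidableEq n] [CommRing R] (A : Matrix m m R) (B : Matrix m n R) (C : Matrix n m R) (c : R) :
    c ^ Fintype.card m * (fromBlocks A B C (c • 1)).det =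
      c ^ Fintype.card n * (c • A - B * C).det := by
  have h : fromBlocks (c • 1) (-B) 0 1 * fromBlocks A B C (c • 1) =
      fromBlocks (c • A - B * C) 0 C (c • 1) := by
    simp [fromBlocks_multiply, sub_eq_add_neg]
  have := congrArg det h
  rw [det_mul, det_fromBlocks_zero₂₁, det_fromBlocks_zero₁₂] at this
  simpa [det_smul, mul_comm] using this

lemma Matrix.charmatrix_one_eq_smul {n R : Type*} [Fintype n] [DecidableEq n] [CommRing R] :
    charmatrix (1 : Matrix n n R) = (X - 1 : R[X]) • 1 := by
  rw [charmatrix_one]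
  ext i j
  simp [diagonal_apply, one_apply]

lemma Matrix.charpoly_fromBlocks_one {m n R : Type*} [Fintype m] [DecidableEq m] [Fintype n]
    [DecidableEq n] [CommRing R] (A : Matrix m m R) (B : Matrix m n R) (C : Matrix n m R) :
    (X - 1 : R[X]) ^ Fintype.card m * (fromBlocks A B C 1).charpoly =
      (X - 1) ^ Fintype.card n *
        ((X - 1 : R[X]) • charmatrix A - (B * C).map Polynomial.C).det := by
  rw [charpoly, charmatrix_fromBlocks, charmatrix_one_eq_smul, det_fromBlocks_smul_one,
    Matrix.neg_mul, Matrix.mul_neg, neg_neg, ← Matrix.map_mul]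

lemma Matrix.charpoly_submatrix_equiv {m n R : Type*} [Fintype m] [DecidableEq m] [Fintype n]
    [DecidableEq n] [CommRing R] (M : Matrix m m R) (e : n ≃ m) :
    (M.submatrix e e).charpoly = M.charpoly := by
  simpa [reindex_apply] using charpoly_reindex e.symm M

lemma Polynomial.roots_eq_of_natDegree_eq_three {R : Type*} [CommRing R] [IsDomain R]
    [DecidableEq R] {f : R[X]} (hf : f.natDegree = 3) {a b c : R} (hab : a ≠ b) (hac : a ≠ c)
    (hbc : b ≠ c) (ha : f.IsRoot a) (hb : f.IsRoot b) (hc : f.IsRoot c) : f.roots = {a, b, c} := by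
  have hf0 : f ≠ 0 := by rintro rfl; simp at hf
  have hle : ({a, b, c} : Multiset R) ≤ f.roots := by
    rw [Multiset.le_iff_subset (by simp [hab, hac, hbc])]
    simpa [Multiset.insert_eq_cons, Multiset.cons_subset, mem_roots hf0] using ⟨ha, hb, hc⟩
  exact (Multiset.eq_of_le_of_card_le hle (by simpa [hf] using card_roots' f)).symm

lemma Multiset.reverse_sort_le {α : Type*} [LinearOrder α] (s : Multiset α) :
    (s.sort (· ≤ ·)).reverse = s.sort (· ≥ ·) := by
  refine List.Perm.eq_of_pairwise' (List.pairwise_reverse.2 (s.pairwise_sort _))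
    (s.pairwise_sort _) ?_
  rw [List.reverse_perm', ← Multiset.coe_eq_coe, Multiset.sort_eq, Multiset.sort_eq]

lemma Multiset.getD_one_reverse_sort_cons_cons {α : Type*} [LinearOrder α] {a b : α}
    {s : Multiset α} (hab : b ≤ a) (hs : ∀ x ∈ s, x ≤ b) (d : α) :
    ((a ::ₘ b ::ₘ s).sort (· ≤ ·)).reverse.getD 1 d = b := by
  rw [reverse_sort_le, sort_cons _ _ _ (by simpa using ⟨hab, fun x hx => (hs x hx).trans hab⟩),
    sort_cons _ _ _ hs]
  rfl

lemma signlessLaplacian_submatrix_equiv {V W : Type*} [Fintype V] [DecidableEq V] [Fintype W]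
    [DecidableEq W] (G : SimpleGraph V) [DecidableRel G.Adj] (e : W ≃ V) :
    (signlessLaplacian G).submatrix e e =
      diagonal ((G.adjMatrix ℝ).submatrix e e *ᵥ 1) + (G.adjMatrix ℝ).submatrix e e := by
  ext x y
  simp [signlessLaplacian, submatrix_mulVec_equiv, diagonal_apply, e.injective.eq_iff]

def doubleStarEquiv (p q : ℕ) : Fin 2 ⊕ (Fin p ⊕ Fin q) ≃ Fin (p + q + 2) :=
  (Equiv.sumCongr (Equiv.refl _) finSumFinEquiv).trans
    (finSumFinEquiv.trans (finCongr (by omega)))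

@[simp] lemma doubleStarEquiv_inl (p q : ℕ) (i : Fin 2) :
    (doubleStarEquiv p q (.inl i) : ℕ) = i := rfl

@[simp] lemma doubleStarEquiv_inr_inl (p q : ℕ) (j : Fin p) :
    (doubleStarEquiv p q (.inr (.inl j)) : ℕ) = 2 + j := rfl

@[simp] lemma doubleStarEquiv_inr_inr (p q : ℕ) (k : Fin q) :
    (doubleStarEquiv p q (.inr (.inr k)) : ℕ) = 2 + (p + k) := rfl

noncomputable def pendantBlock (p q : ℕ) : Matrix (Fin 2) (Fin p ⊕ Fin q) ℝ :=
  Matrix.of ![Sum.elim 1 0, Sum.elim 0 1]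

lemma pendantBlock_mul_transpose (p q : ℕ) :
    pendantBlock p q * (pendantBlock p q)ᵀ = !![(p : ℝ), 0; 0, (q : ℝ)] := by
  ext i j
  fin_cases i <;> fin_cases j <;> simp [pendantBlock, mul_apply, Fintype.sum_sum_type]

lemma adjMatrix_doubleStar_submatrix (p q : ℕ) :
    ((doubleStar p q).adjMatrix ℝ).submatrix (doubleStarEquiv p q) (doubleStarEquiv p q) =
      fromBlocks !![0, 1; 1, 0] (pendantBlock p q) (pendantBlock p q)ᵀ 0 := by
  ext (i | j | k) (i' | j' | k') <;> (try fin_cases i) <;> (try fin_cases i') <;>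
    simp only [submatrix_apply, adjMatrix_apply] <;>
    simp [doubleStar, pendantBlock, Fin.ext_iff, -Fin.val_eq_zero_iff] <;> omega

lemma signlessLaplacian_doubleStar_submatrix (p q : ℕ) :
    (signlessLaplacian (doubleStar p q)).submatrix (doubleStarEquiv p q) (doubleStarEquiv p q) =
      fromBlocks !![(p : ℝ) + 1, 1; 1, (q : ℝ) + 1] (pendantBlock p q) (pendantBlock p q)ᵀ 1 := by
  rw [signlessLaplacian_submatrix_equiv, adjMatrix_doubleStar_submatrix]
  ext (i | j | k) (i' | j' | k') <;> (try fin_cases i) <;> (try fin_cases i') <;>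
    simp [diagonal_apply, mulVec, dotProduct, Fintype.sum_sum_type, pendantBlock, one_apply] <;>
    ring

noncomputable def doubleStarCubic (p q : ℕ) : ℝ[X] :=
  X ^ 3 - C ((p : ℝ) + q + 4) * X ^ 2 + C ((p : ℝ) * q + 2 * p + 2 * q + 5) * X -
    C ((p : ℝ) + q + 2)

lemma eval_doubleStarCubic (p q : ℕ) (x : ℝ) :
    (doubleStarCubic p q).eval x =
      x ^ 3 - (p + q + 4) * x ^ 2 + (p * q + 2 * p + 2 * q + 5) * x - (p + q + 2) := by
  simp [doubleStarCubic]

lemma natDegree_doubleStarCubic (p q : ℕ) : (doubleStarCubic p q).natDegree = 3 := by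
  unfold doubleStarCubic
  compute_degree!

lemma charpoly_signlessLaplacian_doubleStar (p q : ℕ) (h : 2 ≤ p + q) :
    (signlessLaplacian (doubleStar p q)).charpoly =
      (X - 1) ^ (p + q - 2) * (X * doubleStarCubic p q) := by
  have key := charpoly_fromBlocks_one !![(p : ℝ) + 1, 1; 1, (q : ℝ) + 1] (pendantBlock p q)
    (pendantBlock p q)ᵀ
  have hdet : ((X - 1 : ℝ[X]) • charmatrix !![(p : ℝ) + 1, 1; 1, (q : ℝ) + 1] -
      (pendantBlock p q * (pendantBlock p q)ᵀ).map C).det = X * doubleStarCubic p q := by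
    rw [pendantBlock_mul_transpose, det_fin_two]
    simp only [doubleStarCubic, map_add, map_mul, map_natCast, map_ofNat, map_one, map_zero,
      Matrix.sub_apply, Matrix.smul_apply, map_apply, smul_eq_mul, of_apply, cons_val',
      cons_val_zero, cons_val_one, cons_val_fin_one, charmatrix_apply_eq,
      charmatrix_apply_ne _ _ _ zero_ne_one, charmatrix_apply_ne _ _ _ one_ne_zero]
    ring
  rw [← signlessLaplacian_doubleStar_submatrix, charpoly_submatrix_equiv, hdet, Fintype.card_fin,
    Fintype.card_sum, Fintype.card_fin, Fintype.card_fin] at key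
  refine mul_left_cancel₀ (pow_ne_zero 2 (by simpa using X_sub_C_ne_zero (1 : ℝ))) ?_
  rw [key, ← mul_assoc _ _ (X * _), ← pow_add, Nat.add_sub_cancel' h]
lemma doubleStarCubic_ne_zero (p q : ℕ) : doubleStarCubic p q ≠ 0 :=
  ne_zero_of_natDegree_gt (n := 0) (by simp [natDegree_doubleStarCubic])

lemma eval_q_add_one_doubleStarCubic (p q : ℕ) :
    (doubleStarCubic p q).eval ((q : ℝ) + 1) = q * (p - q) := by
  rw [eval_doubleStarCubic]
  ring

lemma doubleStarCubic_roots (p q : ℕ) (hq : 1 ≤ q) (hpq : q ≤ p) :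
    ∃ r₁ r₂ r₃ : ℝ, (doubleStarCubic p q).roots = {r₁, r₂, r₃} ∧ r₁ < 1 ∧
      (q : ℝ) + 1 ≤ r₂ ∧ r₂ < q + 2 ∧ q + 2 < r₃ := by
  have hq' : (1 : ℝ) ≤ q := by exact_mod_cast hq
  have hpq' : (q : ℝ) ≤ p := by exact_mod_cast hpq
  set f := doubleStarCubic p q
  have hf : Continuous fun x => f.eval x := f.continuous
  have f_zero : f.eval 0 = -(p + q + 2) := by rw [eval_doubleStarCubic]; ring
  have f_one : f.eval 1 = p * q := by rw [eval_doubleStarCubic]; ring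
  have f_q_add_two : f.eval ((q : ℝ) + 2) = -p := by rw [eval_doubleStarCubic]; ring
  have f_large : f.eval ((p : ℝ) + q + 4) =
      (p * q + 2 * p + 2 * q + 5) * (p + q + 4) - (p + q + 2) := by
    rw [eval_doubleStarCubic]; ring
  obtain ⟨r₁, ⟨-, hr₁⟩, hf₁⟩ : ∃ r ∈ Set.Ioo (0 : ℝ) 1, f.eval r = 0 :=
    intermediate_value_Ioo zero_le_one hf.continuousOn
      ⟨by simp only [f_zero]; linarith, by simp only [f_one]; nlinarith⟩
  obtain ⟨r₂, ⟨hr₂, hr₂'⟩, hf₂⟩ : ∃ r ∈ Set.Ico ((q : ℝ) + 1) (q + 2), f.eval r = 0 :=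
    intermediate_value_Ico' (by linarith) hf.continuousOn
      ⟨by simp only [f_q_add_two]; linarith,
        by simp only [f, eval_q_add_one_doubleStarCubic]; nlinarith⟩
  obtain ⟨r₃, ⟨hr₃, -⟩, hf₃⟩ : ∃ r ∈ Set.Ioo ((q : ℝ) + 2) (p + q + 4), f.eval r = 0 :=
    intermediate_value_Ioo (by linarith) hf.continuousOn
      ⟨by simp only [f_q_add_two]; linarith, by
        simp only [f_large]
        nlinarith [mul_nonneg (by positivity : (0 : ℝ) ≤ p * q + 2 * p + 2 * q)
          (by positivity : (0 : ℝ) ≤ p + q + 4)]⟩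
  refine ⟨r₁, r₂, r₃, ?_, hr₁, hr₂, hr₂', hr₃⟩
  exact roots_eq_of_natDegree_eq_three (natDegree_doubleStarCubic p q) (by linarith)
    (by linarith) (by linarith) hf₁ hf₂ hf₃

lemma doubleStarCubic_root_eq_q_add_one_iff (p q : ℕ) (hq : 1 ≤ q) {r₁ r₂ r₃ : ℝ}
    (hroots : (doubleStarCubic p q).roots = {r₁, r₂, r₃}) (hr₁ : r₁ < 1) (hr₃ : (q : ℝ) + 2 < r₃) :
    r₂ = q + 1 ↔ p = q := by
  have hmem : ∀ x, x ∈ (doubleStarCubic p q).roots ↔ (doubleStarCubic p q).eval x = 0 := fun x =>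
    (mem_roots (doubleStarCubic_ne_zero p q)).trans IsRoot.def
  constructor
  · intro h
    have hf₂ := (hmem r₂).1 (by simp [hroots])
    rw [h, eval_q_add_one_doubleStarCubic] at hf₂
    have hq' : (1 : ℝ) ≤ q := by exact_mod_cast hq
    exact_mod_cast (show (p : ℝ) = q by nlinarith)
  · intro h
    have hroot := (hmem ((q : ℝ) + 1)).2
      (by rw [eval_q_add_one_doubleStarCubic, h, sub_self, mul_zero])
    simp only [hroots, Multiset.insert_eq_cons, Multiset.mem_cons, Multiset.mem_singleton] at hroot
    rcases hroot with h₁ | h₂ | h₃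
    · linarith [(q.cast_nonneg : (0 : ℝ) ≤ q)]
    · exact h₂.symm
    · linarith

lemma roots_charpoly_signlessLaplacian_doubleStar (p q : ℕ) (h : 2 ≤ p + q) {r₁ r₂ r₃ : ℝ}
    (hroots : (doubleStarCubic p q).roots = {r₁, r₂, r₃}) :
    (signlessLaplacian (doubleStar p q)).charpoly.roots =
      r₃ ::ₘ r₂ ::ₘ r₁ ::ₘ 0 ::ₘ Multiset.replicate (p + q - 2) 1 := by
  have hXcubic : X * doubleStarCubic p q ≠ 0 := mul_ne_zero X_ne_zero (doubleStarCubic_ne_zero p q)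
  have hX1 : (X - 1 : ℝ[X]) = X - C 1 := by rw [C_1]
  rw [charpoly_signlessLaplacian_doubleStar p q h, hX1,
    roots_mul (mul_ne_zero (pow_ne_zero _ (X_sub_C_ne_zero 1)) hXcubic), roots_mul hXcubic,
    roots_pow, roots_X_sub_C, roots_X, hroots]
  simp only [Multiset.nsmul_singleton, Multiset.insert_eq_cons, ← Multiset.singleton_add]
  abel

theorem stmt_13 (p q : ℕ) (hq : 1 ≤ q) (hpq : q ≤ p)
    (γ₂ : ℝ) (hγ : γ₂ = (eigsDesc (signlessLaplacian (doubleStar p q))).getD 1 0) :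
    ((q : ℝ) + 1 ≤ γ₂ ∧ γ₂ < (q : ℝ) + 2) ∧ (γ₂ = (q : ℝ) + 1 ↔ p = q) := by
  obtain ⟨r₁, r₂, r₃, hroots, hr₁, hr₂, hr₂', hr₃⟩ := doubleStarCubic_roots p q hq hpq
  have hγ₂ : γ₂ = r₂ := by
    rw [hγ, eigsDesc, roots_charpoly_signlessLaplacian_doubleStar p q (by omega) hroots]
    refine Multiset.getD_one_reverse_sort_cons_cons (by linarith) ?_ 0
    simp only [Multiset.mem_cons, Multiset.mem_replicate]
    rintro x (rfl | rfl | ⟨-, rfl⟩) <;> linarith [(q.cast_nonneg : (0 : ℝ) ≤ q)]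
  subst hγ₂
  exact ⟨⟨hr₂, hr₂'⟩, doubleStarCubic_root_eq_q_add_one_iff p q hq hroots hr₁ hr₃⟩
end

section
/- For p ≥ q ≥ 1, the largest signless Laplacian eigenvalue of the double star G(p,2,q) lies strictly between p+2 and p+3; in particular it is never an integer. -/
open Matrix SimpleGraph Polynomial

/-! Ordering the vertices as the two centres followed by the pendants, `xI - Q` has the block form
`[[xI - A, -P], [-Pᵀ, (x - 1)I]]` with `A = [[p+1, 1], [1, q+1]]` and `P Pᵀ = diag(p, q)`. The Schur
complement gives `(x - 1)² det(xI - Q) = (x - 1)^(p+q) f(x)` for the quartic `f = mainFactor p q` with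
`f(p + 2) = -q(p + 2) < 0` and `f > 0` on `[p + 3, ∞)`, so the largest root of the characteristic
polynomial lies in `(p + 2, p + 3)`. -/

theorem Multiset.isGreatest_getD_reverse_sort {α : Type*} [LinearOrder α] {s : Multiset α}
    (hs : s ≠ 0) (d : α) : IsGreatest {x | x ∈ s} ((s.sort (· ≤ ·)).reverse.getD 0 d) := by
  have hl : s.sort (· ≤ ·) ≠ [] := by rwa [Ne, ← coe_eq_zero, sort_eq]
  have hlast : (s.sort (· ≤ ·)).reverse.getD 0 d = (s.sort (· ≤ ·)).getLast hl := by
    rw [List.getD_eq_getElem?_getD, ← List.head?_eq_getElem?, List.head?_reverse,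
      List.getLast?_eq_some_getLast hl]
    rfl
  rw [hlast]
  exact ⟨(mem_sort _).1 (List.getLast_mem hl),
    fun x hx => (pairwise_sort s _).rel_getLast ((mem_sort _).2 hx)⟩

theorem Polynomial.getD_reverse_sort_roots_mem_Ioo {f : ℝ[X]} {a b : ℝ} (ha : f.eval a < 0)
    (hb : ∀ x, b ≤ x → 0 < f.eval x) (d : ℝ) :
    (f.roots.sort (· ≤ ·)).reverse.getD 0 d ∈ Set.Ioo a b := by
  have hab : a < b := lt_of_not_ge fun h => (hb a h).not_gt ha
  have hf : f ≠ 0 := fun h => (hb b le_rfl).ne' (by simp [h])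
  obtain ⟨r, hr, hfr⟩ : ∃ r ∈ Set.Ioo a b, f.eval r = 0 :=
    intermediate_value_Ioo hab.le f.continuous.continuousOn ⟨ha, hb b le_rfl⟩
  have hr_root : r ∈ f.roots := (mem_roots hf).2 hfr
  obtain ⟨hmem, hmax⟩ :=
    Multiset.isGreatest_getD_reverse_sort (s := f.roots) (by rintro h; simp [h] at hr_root) d
  refine ⟨hr.1.trans_le (hmax hr_root), lt_of_not_ge fun h => ?_⟩
  exact (hb _ h).ne' ((mem_roots hf).1 hmem)

lemma Matrix.scalar_sub_fromBlocks_one {m n R : Type*} [Fintype m] [Fintype n] [DecidableEq m]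
    [DecidableEq n] [CommRing R] (A : Matrix m m R) (B : Matrix m n R) (C : Matrix n m R) (x : R) :
    scalar (m ⊕ n) x - fromBlocks A B C 1 =
      fromBlocks (scalar m x - A) (-B) (-C) (scalar n (x - 1)) := by
  ext (i | i) (j | j) <;> simp [one_apply, diagonal_apply]
  all_goals split_ifs <;> ring

lemma Matrix.det_scalar_sub_fromBlocks_one {m n R : Type*} [Fintype m] [Fintype n] [DecidableEq m]
    [DecidableEq n] [Field R] (A : Matrix m m R) (B : Matrix m n R) (C : Matrix n m R) {x : R}
    (hx : x ≠ 1) :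
    det (scalar (m ⊕ n) x - fromBlocks A B C 1) =
      (x - 1) ^ Fintype.card n * det (scalar m x - A - (x - 1)⁻¹ • (B * C)) := by
  let _ : Invertible (x - 1) := invertibleOfNonzero (sub_ne_zero.mpr hx)
  let _ := Invertible.map (scalar n) (x - 1)
  rw [scalar_sub_fromBlocks_one, det_fromBlocks₂₂, ← map_invOf, invOf_eq_inv, scalar_apply,
    det_diagonal, Finset.prod_const, Finset.card_univ, Matrix.neg_mul, Matrix.mul_neg,
    Matrix.neg_mul, neg_neg, scalar_apply (n := n), ← smul_one_eq_diagonal, Matrix.mul_smul,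
    Matrix.mul_one, Matrix.smul_mul]

namespace doubleStar

variable (p q : ℕ)

def equivSum : Fin 2 ⊕ (Fin p ⊕ Fin q) ≃ Fin (p + q + 2) :=
  (Equiv.sumCongr (Equiv.refl _) finSumFinEquiv).trans (finSumFinEquiv.trans (finCongr (by omega)))

def center : Fin p ⊕ Fin q → Fin 2 := Sum.elim (fun _ => 0) (fun _ => 1)

variable {p q}

lemma val_equivSum_inl (i : Fin 2) : (equivSum p q (.inl i) : ℕ) = i := by
  simp [equivSum]

lemma val_equivSum_inr_inl (j : Fin p) : (equivSum p q (.inr (.inl j)) : ℕ) = j + 2 := by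
  simp [equivSum]

lemma val_equivSum_inr_inr (k : Fin q) :
    (equivSum p q (.inr (.inr k)) : ℕ) = p + k + 2 := by
  simp [equivSum]

lemma adj_iff (a b : Fin (p + q + 2)) :
    (doubleStar p q).Adj a b ↔ (a : ℕ) ≠ b ∧
      (((a : ℕ) = 0 ∧ (b : ℕ) = 1 ∨ (a : ℕ) = 0 ∧ 2 ≤ (b : ℕ) ∧ (b : ℕ) < p + 2 ∨
          (a : ℕ) = 1 ∧ p + 2 ≤ (b : ℕ)) ∨
        ((b : ℕ) = 0 ∧ (a : ℕ) = 1 ∨ (b : ℕ) = 0 ∧ 2 ≤ (a : ℕ) ∧ (a : ℕ) < p + 2 ∨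
          (b : ℕ) = 1 ∧ p + 2 ≤ (a : ℕ))) := by
  rw [doubleStar, fromRel_adj, ← Fin.val_ne_iff]

lemma adj_inl_inl (i j : Fin 2) :
    (doubleStar p q).Adj (equivSum p q (.inl i)) (equivSum p q (.inl j)) ↔ i ≠ j := by
  rw [adj_iff, val_equivSum_inl, val_equivSum_inl, Fin.val_ne_iff]
  omega

lemma adj_inl_inr (i : Fin 2) (j : Fin p ⊕ Fin q) :
    (doubleStar p q).Adj (equivSum p q (.inl i)) (equivSum p q (.inr j)) ↔ center p q j = i := by
  rcases j with j | k <;>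
    simp only [adj_iff, val_equivSum_inl, val_equivSum_inr_inl, val_equivSum_inr_inr, center,
      Sum.elim_inl, Sum.elim_inr, Fin.ext_iff, Fin.val_zero, Fin.val_one] <;> omega

lemma adj_inr_inl (j : Fin p ⊕ Fin q) (i : Fin 2) :
    (doubleStar p q).Adj (equivSum p q (.inr j)) (equivSum p q (.inl i)) ↔ center p q j = i := by
  rw [adj_comm, adj_inl_inr]

lemma not_adj_inr_inr (j k : Fin p ⊕ Fin q) :
    ¬ (doubleStar p q).Adj (equivSum p q (.inr j)) (equivSum p q (.inr k)) := by
  rcases j with j | j <;> rcases k with k | k <;>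
    simp only [adj_iff, val_equivSum_inr_inl, val_equivSum_inr_inr] <;> omega

lemma degree_eq_sum (a : Fin (p + q + 2)) :
    (doubleStar p q).degree a =
      ∑ b : Fin 2 ⊕ (Fin p ⊕ Fin q), if (doubleStar p q).Adj a (equivSum p q b) then 1 else 0 := by
  rw [← card_neighborFinset_eq_degree, neighborFinset_eq_filter, Finset.card_filter,
    ← (equivSum p q).sum_comp]

lemma degree_inl_zero : (doubleStar p q).degree (equivSum p q (.inl 0)) = p + 1 := by
  simp only [degree_eq_sum, Fintype.sum_sum_type, adj_inl_inl, adj_inl_inr, center, Sum.elim_inl,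
    Sum.elim_inr, Fin.sum_univ_two]
  simp [add_comm]

lemma degree_inl_one : (doubleStar p q).degree (equivSum p q (.inl 1)) = q + 1 := by
  simp only [degree_eq_sum, Fintype.sum_sum_type, adj_inl_inl, adj_inl_inr, center, Sum.elim_inl,
    Sum.elim_inr, Fin.sum_univ_two]
  simp [add_comm]

lemma degree_inr (j : Fin p ⊕ Fin q) : (doubleStar p q).degree (equivSum p q (.inr j)) = 1 := by
  simp only [degree_eq_sum, Fintype.sum_sum_type, adj_inr_inl, not_adj_inr_inr, Fin.sum_univ_two]
  rcases j with j | j <;> simp [center]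

variable (p q) in
def incidence : Matrix (Fin 2) (Fin p ⊕ Fin q) ℝ :=
  Matrix.of fun i j => if center p q j = i then 1 else 0

lemma signlessLaplacian_submatrix_equivSum :
    (signlessLaplacian (doubleStar p q)).submatrix (equivSum p q) (equivSum p q) =
      fromBlocks !![(p : ℝ) + 1, 1; 1, (q : ℝ) + 1] (incidence p q) (incidence p q)ᵀ 1 := by
  ext (i | j) (i' | j')
  · fin_cases i <;> fin_cases i' <;>
      simp [signlessLaplacian, adj_inl_inl, degree_inl_zero, degree_inl_one]
  · simp [signlessLaplacian, adj_inl_inr, incidence]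
  · simp [signlessLaplacian, adj_inr_inl, incidence]
  · simp [signlessLaplacian, not_adj_inr_inr, diagonal_apply, degree_inr, one_apply]

lemma incidence_mul_transpose : incidence p q * (incidence p q)ᵀ = !![(p : ℝ), 0; 0, (q : ℝ)] := by
  ext i i'
  fin_cases i <;> fin_cases i' <;> simp [incidence, mul_apply, Fintype.sum_sum_type, center]

variable (p q) in
def mainFactor (x : ℝ) : ℝ :=
  ((x - 1) * (x - p - 1) - p) * ((x - 1) * (x - q - 1) - q) - (x - 1) ^ 2

lemma eval_charpoly_signlessLaplacian {x : ℝ} (hx : x ≠ 1) :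
    (x - 1) ^ 2 * (signlessLaplacian (doubleStar p q)).charpoly.eval x =
      (x - 1) ^ (p + q) * mainFactor p q x := by
  rw [← charpoly_reindex (equivSum p q).symm, reindex_apply, Equiv.symm_symm, eval_charpoly,
    signlessLaplacian_submatrix_equivSum, det_scalar_sub_fromBlocks_one _ _ _ hx,
    incidence_mul_transpose, Fintype.card_sum, Fintype.card_fin, Fintype.card_fin,
    det_fin_two]
  have hx' : x - 1 ≠ 0 := sub_ne_zero.mpr hx
  simp only [scalar_apply, smul_of, smul_cons, smul_eq_mul, mul_zero, smul_empty, Matrix.sub_apply,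
    diagonal_apply_eq, of_apply, cons_val', cons_val_zero, cons_val_fin_one, cons_val_one, ne_eq,
    zero_ne_one, one_ne_zero, not_false_eq_true, diagonal_apply_ne, zero_sub, sub_zero, mul_neg,
    mul_one, neg_neg]
  field_simp
  unfold mainFactor
  ring

lemma mainFactor_at : mainFactor p q (p + 2) = -(q * (p + 2)) := by
  unfold mainFactor
  ring

lemma mainFactor_pos (hqp : q ≤ p) {x : ℝ} (hx : p + 3 ≤ x) : 0 < mainFactor p q x := by
  have hqp' : (q : ℝ) ≤ p := by exact_mod_cast hqp
  have hp : (0 : ℝ) ≤ p := p.cast_nonneg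
  have hA : x - 1 < (x - 1) * (x - p - 1) - p := by nlinarith
  have hAB : (x - 1) * (x - p - 1) - p ≤ (x - 1) * (x - q - 1) - q := by nlinarith
  unfold mainFactor
  nlinarith

lemma eval_charpoly_signlessLaplacian_neg (hq : 0 < q) :
    (signlessLaplacian (doubleStar p q)).charpoly.eval ((p : ℝ) + 2) < 0 := by
  have hx1 : (0 : ℝ) < p + 2 - 1 := by linarith [p.cast_nonneg (α := ℝ)]
  have h := eval_charpoly_signlessLaplacian (p := p) (q := q) (sub_pos.1 hx1).ne'
  rw [mainFactor_at] at h
  have hq' : (0 : ℝ) < q := by exact_mod_cast hq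
  exact neg_of_mul_neg_right
    (h.symm ▸ mul_neg_of_pos_of_neg (pow_pos hx1 _) (neg_neg_of_pos (by positivity))) (sq_nonneg _)

lemma eval_charpoly_signlessLaplacian_pos (hqp : q ≤ p) {x : ℝ} (hx : p + 3 ≤ x) :
    0 < (signlessLaplacian (doubleStar p q)).charpoly.eval x := by
  have hx1 : 0 < x - 1 := by linarith [p.cast_nonneg (α := ℝ)]
  have h := eval_charpoly_signlessLaplacian (p := p) (q := q) (sub_pos.1 hx1).ne'
  exact pos_of_mul_pos_right (h.symm ▸ mul_pos (pow_pos hx1 _) (mainFactor_pos hqp hx))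
    (sq_nonneg _)

end doubleStar

theorem stmt_14 (p q : ℕ) (hq : 1 ≤ q) (hpq : q ≤ p)
    (γ₁ : ℝ) (hγ : γ₁ = (eigsDesc (signlessLaplacian (doubleStar p q))).getD 0 0) :
    ((p : ℝ) + 2 < γ₁ ∧ γ₁ < (p : ℝ) + 3) ∧ ¬ ∃ k : ℤ, γ₁ = (k : ℝ) := by
  have hγ_mem : γ₁ ∈ Set.Ioo ((p : ℝ) + 2) ((p : ℝ) + 3) :=
    hγ ▸ Polynomial.getD_reverse_sort_roots_mem_Ioo
      (doubleStar.eval_charpoly_signlessLaplacian_neg hq)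
      (fun _ => doubleStar.eval_charpoly_signlessLaplacian_pos hpq) 0
  refine ⟨hγ_mem, ?_⟩
  rintro ⟨k, rfl⟩
  have h₁ : (p : ℤ) + 2 < k := by exact_mod_cast hγ_mem.1
  have h₂ : k < (p : ℤ) + 3 := by exact_mod_cast hγ_mem.2
  omega
end

section
/- For any graph G of order n ≥ 2, the second largest signless Laplacian eigenvalue satisfies γ₂(G) ≤ n − 2. -/
open Matrix SimpleGraph Polynomial

/-!
Since `Q(G) + Q(Gᶜ) = (n - 2) I + J` and `Q(Gᶜ)` is positive semidefinite, the quadratic form of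
`Q(G)` is at most `(n - 2) ‖x‖²` on the hyperplane `x ⊥ 𝟙`. The plane spanned by eigenvectors of
the two largest eigenvalues meets this hyperplane in a nonzero vector, on which the form is at
least `γ₂ ‖x‖²`; hence `γ₂ ≤ n - 2`.
-/

theorem exists_ne_zero_mul_add_mul_eq_zero (p q : ℝ) :
    ∃ a b : ℝ, (a ≠ 0 ∨ b ≠ 0) ∧ a * p + b * q = 0 := by
  by_cases hq : q = 0
  · exact ⟨0, 1, Or.inr one_ne_zero, by simp [hq]⟩
  · exact ⟨q, -p, Or.inl hq, by ring⟩

namespace Matrix.IsHermitian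

variable {n : Type*} [Fintype n] [DecidableEq n] {A : Matrix n n ℝ} (hA : A.IsHermitian)
include hA

theorem dotProduct_eigenvectorBasis (i j : n) :
    ⇑(hA.eigenvectorBasis i) ⬝ᵥ ⇑(hA.eigenvectorBasis j) = if i = j then 1 else 0 := by
  rw [← orthonormal_iff_ite.mp hA.eigenvectorBasis.orthonormal i j,
    EuclideanSpace.inner_eq_star_dotProduct, star_trivial, dotProduct_comm]

theorem eigenvalues_le_or_eigenvalues_le {c : ℝ} {u : n → ℝ}
    (hle : ∀ x, x ⬝ᵥ u = 0 → x ⬝ᵥ (A *ᵥ x) ≤ c * (x ⬝ᵥ x)) {i j : n} (hij : i ≠ j) :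
    hA.eigenvalues i ≤ c ∨ hA.eigenvalues j ≤ c := by
  set v := ⇑(hA.eigenvectorBasis i)
  set w := ⇑(hA.eigenvectorBasis j)
  obtain ⟨a, b, hab, horth⟩ := exists_ne_zero_mul_add_mul_eq_zero (v ⬝ᵥ u) (w ⬝ᵥ u)
  have hvw : v ⬝ᵥ w = 0 := by simp [v, w, dotProduct_eigenvectorBasis, hij]
  have hwv : w ⬝ᵥ v = 0 := by rw [dotProduct_comm, hvw]
  have hvv : v ⬝ᵥ v = 1 := by simp [v, dotProduct_eigenvectorBasis]
  have hww : w ⬝ᵥ w = 1 := by simp [w, dotProduct_eigenvectorBasis]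
  have hx := hle (a • v + b • w) (by simpa [add_dotProduct, smul_dotProduct] using horth)
  have hAv : A *ᵥ v = hA.eigenvalues i • v := hA.mulVec_eigenvectorBasis i
  have hAw : A *ᵥ w = hA.eigenvalues j • w := hA.mulVec_eigenvectorBasis j
  rw [mulVec_add, mulVec_smul, mulVec_smul, hAv, hAw] at hx
  simp only [add_dotProduct, dotProduct_add, smul_dotProduct, dotProduct_smul, hvw, hwv,
    hvv, hww, smul_eq_mul] at hx
  by_contra! hgt
  rcases hab with ha | hb
  · nlinarith [mul_pos (by positivity : 0 < a ^ 2) (sub_pos.mpr hgt.1),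
      mul_nonneg (sq_nonneg b) (sub_pos.mpr hgt.2).le]
  · nlinarith [mul_nonneg (sq_nonneg a) (sub_pos.mpr hgt.1).le,
      mul_pos (by positivity : 0 < b ^ 2) (sub_pos.mpr hgt.2)]

theorem eigenvalues₀_one_le {c : ℝ} {u : n → ℝ}
    (hle : ∀ x, x ⬝ᵥ u = 0 → x ⬝ᵥ (A *ᵥ x) ≤ c * (x ⬝ᵥ x)) (hn : 1 < Fintype.card n) :
    hA.eigenvalues₀ ⟨1, hn⟩ ≤ c := by
  let e : Fin (Fintype.card n) ≃ n := Fintype.equivOfCardEq (Fintype.card_fin _)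
  have hanti : hA.eigenvalues₀ ⟨1, hn⟩ ≤ hA.eigenvalues₀ ⟨0, by omega⟩ :=
    hA.eigenvalues₀_antitone (Fin.mk_le_mk.mpr zero_le_one)
  have h := hA.eigenvalues_le_or_eigenvalues_le hle (i := e ⟨0, by omega⟩) (j := e ⟨1, hn⟩)
    (e.injective.ne (by simp))
  simp only [eigenvalues, e, Equiv.symm_apply_apply] at h
  rcases h with h | h <;> linarith

theorem eigsDesc_eq_ofFn_eigenvalues₀ : eigsDesc A = List.ofFn hA.eigenvalues₀ := by
  refine List.Perm.eq_of_sortedGE ?_ hA.eigenvalues₀_antitone.sortedGE_ofFn ?_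
  · exact List.sortedGE_reverse.mpr (List.sortedLE_iff_pairwise.mpr (Multiset.pairwise_sort _ _))
  · refine (List.reverse_perm _).trans ?_
    rw [← Multiset.coe_eq_coe, Multiset.sort_eq,
      hA.roots_charpoly_eq_eigenvalues₀, Fin.univ_val_map]
    simp

end Matrix.IsHermitian

namespace SimpleGraph

variable {V : Type*} [Fintype V] [DecidableEq V] (G : SimpleGraph V) [DecidableRel G.Adj]

theorem signlessLaplacian_eq_degMatrix_add_adjMatrix :
    signlessLaplacian G = G.degMatrix ℝ + G.adjMatrix ℝ :=
  rfl

theorem isHermitian_signlessLaplacian : (signlessLaplacian G).IsHermitian :=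
  (G.isHermitian_degMatrix ℝ).add (G.isHermitian_adjMatrix ℝ)

theorem dotProduct_signlessLaplacian_mulVec (x : V → ℝ) :
    x ⬝ᵥ (signlessLaplacian G *ᵥ x) =
      (∑ i, ∑ j, if G.Adj i j then (x i + x j) ^ 2 else 0) / 2 := by
  simp_rw [signlessLaplacian_eq_degMatrix_add_adjMatrix, add_mulVec, dotProduct_add,
    dotProduct_mulVec_degMatrix, dotProduct_mulVec_adjMatrix, ← Finset.sum_add_distrib,
    degree_eq_sum_if_adj, Finset.sum_mul, ite_mul, one_mul, zero_mul, ← Finset.sum_add_distrib,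
    ite_add_ite, add_zero]
  rw [← add_self_div_two (∑ i : V, ∑ j : V, _)]
  conv_lhs => enter [1, 2, 2, i, 2, j]; rw [if_congr (adj_comm G i j) rfl rfl]
  conv_lhs => enter [1, 2]; rw [Finset.sum_comm]
  simp_rw [← Finset.sum_add_distrib, ite_add_ite]
  congr 2 with i
  congr 2 with j
  ring_nf

theorem posSemidef_signlessLaplacian : (signlessLaplacian G).PosSemidef := by
  refine .of_dotProduct_mulVec_nonneg (isHermitian_signlessLaplacian G) fun x ↦ ?_
  rw [star_trivial, dotProduct_signlessLaplacian_mulVec]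
  positivity

theorem signlessLaplacian_add_signlessLaplacian_compl :
    signlessLaplacian G + signlessLaplacian Gᶜ = ((Fintype.card V : ℝ) - 2) • 1 + of 1 := by
  ext u v
  by_cases huv : u = v
  · subst huv
    have hdeg : G.degree u + Gᶜ.degree u + 1 = Fintype.card V := by
      have := G.degree_lt_card_verts u
      rw [degree_compl]
      omega
    simp only [signlessLaplacian, Matrix.add_apply, diagonal_apply_eq, adjMatrix_apply,
      SimpleGraph.irrefl, if_false, Matrix.smul_apply, one_apply_eq, smul_eq_mul, of_apply,
      Pi.one_apply]
    rw [← hdeg]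
    push_cast
    ring
  · by_cases hadj : G.Adj u v <;> simp [signlessLaplacian, huv, hadj, compl_adj]

theorem dotProduct_signlessLaplacian_mulVec_le {x : V → ℝ} (hx : ∑ v, x v = 0) :
    x ⬝ᵥ (signlessLaplacian G *ᵥ x) ≤ ((Fintype.card V : ℝ) - 2) * (x ⬝ᵥ x) := by
  have hall : x ⬝ᵥ (of 1 *ᵥ x) = 0 := by simp [dotProduct, mulVec, hx]
  have hsum : x ⬝ᵥ (signlessLaplacian G *ᵥ x) + x ⬝ᵥ (signlessLaplacian Gᶜ *ᵥ x) =
      ((Fintype.card V : ℝ) - 2) * (x ⬝ᵥ x) := by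
    rw [← dotProduct_add, ← add_mulVec, signlessLaplacian_add_signlessLaplacian_compl, add_mulVec,
      dotProduct_add, hall, smul_mulVec, one_mulVec, dotProduct_smul, smul_eq_mul, add_zero]
  have hcompl := (posSemidef_signlessLaplacian Gᶜ).dotProduct_mulVec_nonneg x
  rw [star_trivial] at hcompl
  linarith

end SimpleGraph

theorem stmt_15 {V : Type*} [Fintype V] [DecidableEq V] (G : SimpleGraph V)
    [DecidableRel G.Adj] (hn : 2 ≤ Fintype.card V) :
    (eigsDesc (signlessLaplacian G)).getD 1 0 ≤ (Fintype.card V : ℝ) - 2 := by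
  have hQ := G.isHermitian_signlessLaplacian
  have hlen : 1 < (List.ofFn hQ.eigenvalues₀).length := by rw [List.length_ofFn]; omega
  rw [hQ.eigsDesc_eq_ofFn_eigenvalues₀, List.getD_eq_getElem _ _ hlen, List.getElem_ofFn]
  refine hQ.eigenvalues₀_one_le (u := 1) (fun x hx ↦ ?_) hn
  exact G.dotProduct_signlessLaplacian_mulVec_le (by rwa [dotProduct_one] at hx)
end
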